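/- Let n₁, n₂ ∈ ℝ³ be nonzero vectors with n₁ ≠ ±n₂, and let u₁, u₂ ∈ ℂ³ \ {0} satisfy u₁ · n₁ = 0 and u₂ · n₂ = 0. Then P_{n₁+n₂}[(u₁ · n₂)u₂ + (u₂ · n₁)u₁] = 0 holds if and only if one of the following holds: (i) n₁ and n₂ are linearly dependent; (ii) n₁, n₂ are linearly independent and the real and imaginary parts of u₁ and u₂ are all perpendicular to the plane spanned by n₁ and n₂; (iii) neither (i) nor (ii) holds, |n₁| = |n₂|, and u₂ = γ R_{n̂₁↦n̂₂} u₁ for some nonzero γ ∈ ℂ, where n̂ⱼ = nⱼ/|nⱼ|. -/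

import Mathlib

/-!
Write `a = u₁ · n₂`, `b = u₂ · n₁` and `m = n₁ + n₂`. Since `uⱼ · nⱼ = 0`, the interaction vector
`a u₂ + b u₁` has `m`-component `2ab`, so its projection vanishes iff `a u₂ + b u₁ = (2ab/|m|²) m`.
If `n₁ ∥ n₂` then `a = b = 0`. Otherwise the equation forces `a = 0 ↔ b = 0`; when both are
nonzero, dotting it with `n₁` gives `|m|² = 2 m · n₁`, i.e. `|n₁| = |n₂|`. For equal lengths,
Rodrigues' formula and the Lagrange identity show that `R_{n̂₁ ↦ n̂₂}` acts on `n₁^⊥` as the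
reflection `u ↦ u - 2 (u · m)/|m|² m`, and the equation then says exactly `u₂ = -(b/a) R u₁`.
-/

open scoped Classical

noncomputable section

abbrev V3 := Fin 3 → ℝ
abbrev C3 := Fin 3 → ℂ

/-- Canonical inclusion of real vectors into `ℂ³`. -/
def toC (v : V3) : C3 := fun i => (v i : ℂ)

/-- Real dot product. -/
def dotR (u v : V3) : ℝ := ∑ i, u i * v i

/-- ℂ-bilinear dot product on `ℂ³`. -/
def dotC (u v : C3) : ℂ := ∑ i, u i * v i

/-- Euclidean norm of a vector of `ℝ³`. -/
def norm3 (v : V3) : ℝ := Real.sqrt (dotR v v)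

/-- Cross product on `ℝ³`. -/
def crossR (u v : V3) : V3 :=
  ![u 1 * v 2 - u 2 * v 1, u 2 * v 0 - u 0 * v 2, u 0 * v 1 - u 1 * v 0]

/-- ℂ-bilinear cross product on `ℂ³`. -/
def crossC (u v : C3) : C3 :=
  ![u 1 * v 2 - u 2 * v 1, u 2 * v 0 - u 0 * v 2, u 0 * v 1 - u 1 * v 0]

/-- Orthogonal projection of `ℂ³` onto `{v : m · v = 0}` (for a real frequency `m`). -/
def projC (m : V3) (v : C3) : C3 :=
  v - (dotC (toC m) v / ((dotR m m : ℝ) : ℂ)) • toC m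

/-- Rodrigues rotation formula (unit axis `a`, cosine `c`, sine `s`). -/
def rodriguesR (a : V3) (c s : ℝ) (v : V3) : V3 :=
  c • v + s • crossR a v + ((1 - c) * dotR a v) • a

/-- Complexified Rodrigues rotation formula; since the coefficients are real this acts on the
real and imaginary parts separately. -/
def rodriguesC (a : C3) (c s : ℂ) (v : C3) : C3 :=
  c • v + s • crossC a v + ((1 - c) * dotC a v) • a

/-- The rotation `R_{ω₁ ↦ ω₂}` around the axis `ω₁ × ω₂` by the angle `θ ∈ (0,π)` with
`cos θ = ω₁ · ω₂` (for unit vectors `ω₁ ≠ ±ω₂`, so that `sin θ = |ω₁ × ω₂|`). -/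
def geoRot (ω₁ ω₂ : V3) (v : V3) : V3 :=
  rodriguesR ((norm3 (crossR ω₁ ω₂))⁻¹ • crossR ω₁ ω₂) (dotR ω₁ ω₂) (norm3 (crossR ω₁ ω₂)) v

/-- The rotation `R_{ω₁ ↦ ω₂}` extended complex-linearly to `ℂ³`. -/
def geoRotC (ω₁ ω₂ : V3) (v : C3) : C3 :=
  rodriguesC (toC ((norm3 (crossR ω₁ ω₂))⁻¹ • crossR ω₁ ω₂)) ((dotR ω₁ ω₂ : ℝ) : ℂ)
    ((norm3 (crossR ω₁ ω₂) : ℝ) : ℂ) v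

/-- Rotation around the unit axis `a` by the angle `α`, extended complex-linearly to `ℂ³`. -/
def axisRotC (a : V3) (α : ℝ) (v : C3) : C3 :=
  rodriguesC (toC a) ((Real.cos α : ℝ) : ℂ) ((Real.sin α : ℝ) : ℂ) v

/-- `e∥(n) = e⊥ × (n/|n|)`. -/
def ePar (ePerp : V3) (n : V3) : V3 := crossR ePerp ((norm3 n)⁻¹ • n)

/-- Partial derivative of a real-valued function on `ℝ³`. -/
def pderivR (f : V3 → ℝ) (i : Fin 3) (x : V3) : ℝ := fderiv ℝ f x (Pi.single i 1)

/-- Partial derivative of a complex-valued function on `ℝ³`. -/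
def pderivC (f : V3 → ℂ) (i : Fin 3) (x : V3) : ℂ := fderiv ℝ f x (Pi.single i 1)

/-- Curl of a real vector field on `ℝ³`. -/
def curlR (u : V3 → V3) (x : V3) : V3 :=
  ![pderivR (fun y => u y 2) 1 x - pderivR (fun y => u y 1) 2 x,
    pderivR (fun y => u y 0) 2 x - pderivR (fun y => u y 2) 0 x,
    pderivR (fun y => u y 1) 0 x - pderivR (fun y => u y 0) 1 x]

/-- Curl of a complex vector field on `ℝ³`. -/
def curlC (u : V3 → C3) (x : V3) : C3 :=
  ![pderivC (fun y => u y 2) 1 x - pderivC (fun y => u y 1) 2 x,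
    pderivC (fun y => u y 0) 2 x - pderivC (fun y => u y 2) 0 x,
    pderivC (fun y => u y 1) 0 x - pderivC (fun y => u y 0) 1 x]

/-- Real and imaginary parts of a complex vector, as real vectors. -/
def reV (u : C3) : V3 := fun i => (u i).re
def imV (u : C3) : V3 := fun i => (u i).im

/-- `u` is perpendicular (in real and imaginary parts) to the plane spanned by `n₁, n₂`. -/
def PerpToPlane (n₁ n₂ : V3) (u : C3) : Prop :=
  dotR (reV u) n₁ = 0 ∧ dotR (reV u) n₂ = 0 ∧ dotR (imV u) n₁ = 0 ∧ dotR (imV u) n₂ = 0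

open Matrix

lemma dotR_eq_dotProduct (u v : V3) : dotR u v = u ⬝ᵥ v := rfl

lemma dotC_eq_dotProduct (u v : C3) : dotC u v = u ⬝ᵥ v := rfl

lemma crossR_eq_cross (u v : V3) : crossR u v = u ⨯₃ v := (cross_apply u v).symm

lemma crossC_eq_cross (u v : C3) : crossC u v = u ⨯₃ v := (cross_apply u v).symm

lemma toC_add (x y : V3) : toC (x + y) = toC x + toC y := by
  ext i; simp [toC]

lemma toC_smul (r : ℝ) (x : V3) : toC (r • x) = (r : ℂ) • toC x := by
  ext i; simp [toC]

lemma toC_cross (x y : V3) : toC (x ⨯₃ y) = toC x ⨯₃ toC y := by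
  ext i; fin_cases i <;> simp [toC, cross_apply]

lemma toC_dotProduct_toC (x y : V3) : toC x ⬝ᵥ toC y = ((x ⬝ᵥ y : ℝ) : ℂ) := by
  simp [toC, dotProduct]

lemma dotProduct_self_nonneg (v : V3) : 0 ≤ v ⬝ᵥ v :=
  Finset.sum_nonneg fun i _ => mul_self_nonneg (v i)

lemma norm3_sq (v : V3) : norm3 v ^ 2 = v ⬝ᵥ v :=
  Real.sq_sqrt (dotProduct_self_nonneg v)

lemma norm3_pos {v : V3} (hv : v ≠ 0) : 0 < norm3 v :=
  Real.sqrt_pos.2 <| (dotProduct_self_nonneg v).lt_of_ne' (dotProduct_self_eq_zero.not.2 hv)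

lemma norm3_eq_norm3_iff (x y : V3) :
    norm3 x = norm3 y ↔ (x + y) ⬝ᵥ (x + y) = 2 * ((x + y) ⬝ᵥ x) := by
  rw [norm3, norm3, dotR_eq_dotProduct, dotR_eq_dotProduct,
    Real.sqrt_inj (dotProduct_self_nonneg x) (dotProduct_self_nonneg y)]
  simp only [add_dotProduct, dotProduct_add, dotProduct_comm y x]
  constructor <;> intro h <;> linarith

lemma add_dotProduct_add_ne_zero_of_linearIndependent {x y : V3}
    (h : LinearIndependent ℝ ![x, y]) : (x + y) ⬝ᵥ (x + y) ≠ 0 :=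
  dotProduct_self_eq_zero.not.2 fun hxy =>
    one_ne_zero (LinearIndependent.pair_iff.1 h 1 1 (by simpa)).1

lemma dotProduct_toC_eq_zero_of_not_linearIndependent {x y : V3} (hx : x ≠ 0)
    (h : ¬ LinearIndependent ℝ ![x, y]) {u : C3} (hu : u ⬝ᵥ toC x = 0) : u ⬝ᵥ toC y = 0 := by
  obtain ⟨r, rfl⟩ : ∃ r : ℝ, r • x = y := by simpa [LinearIndependent.pair_iff' hx] using h
  rw [toC_smul, dotProduct_smul, hu, smul_zero]

lemma dotProduct_toC_eq_zero_iff (u : C3) (n : V3) :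
    u ⬝ᵥ toC n = 0 ↔ reV u ⬝ᵥ n = 0 ∧ imV u ⬝ᵥ n = 0 := by
  simp [Complex.ext_iff, dotProduct, toC, reV, imV]

lemma perpToPlane_iff (n₁ n₂ : V3) (u : C3) :
    PerpToPlane n₁ n₂ u ↔ u ⬝ᵥ toC n₁ = 0 ∧ u ⬝ᵥ toC n₂ = 0 := by
  simp only [PerpToPlane, dotProduct_toC_eq_zero_iff, dotR_eq_dotProduct]
  tauto

section CrossProduct

variable {R : Type*} [CommRing R] {x v : Fin 3 → R}

lemma cross_cross_of_dotProduct_eq_zero (hv : x ⬝ᵥ v = 0) (y : Fin 3 → R) :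
    x ⨯₃ y ⨯₃ v = -(y ⬝ᵥ v) • x := by
  rw [cross_cross_eq_smul_sub_smul, hv, zero_smul, zero_sub, neg_smul]

lemma dotProduct_cross_smul_cross_of_dotProduct_eq_zero (hv : x ⬝ᵥ v = 0) (y : Fin 3 → R) :
    (x ⨯₃ y ⬝ᵥ v) • x ⨯₃ y =
      (x ⨯₃ y ⬝ᵥ x ⨯₃ y) • v - (y ⬝ᵥ v) • ((x ⬝ᵥ x) • y - (x ⬝ᵥ y) • x) := by
  have h := cross_cross_eq_smul_sub_smul' (x ⨯₃ y) (x ⨯₃ y) v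
  rw [cross_cross_of_dotProduct_eq_zero hv, map_smul, cross_cross_eq_smul_sub_smul x y x,
    dotProduct_comm y x] at h
  linear_combination (norm := module) -h

end CrossProduct

lemma geoRotC_apply {ω₁ ω₂ : V3} (h : ω₁ ⨯₃ ω₂ ≠ 0) (v : C3) :
    geoRotC ω₁ ω₂ v = ((ω₁ ⬝ᵥ ω₂ : ℝ) : ℂ) • v + toC (ω₁ ⨯₃ ω₂) ⨯₃ v +
      (((1 - ω₁ ⬝ᵥ ω₂) / (ω₁ ⨯₃ ω₂ ⬝ᵥ ω₁ ⨯₃ ω₂) : ℝ) * (toC (ω₁ ⨯₃ ω₂) ⬝ᵥ v)) •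
        toC (ω₁ ⨯₃ ω₂) := by
  have hσ : (norm3 (ω₁ ⨯₃ ω₂) : ℂ) ≠ 0 := Complex.ofReal_ne_zero.2 (norm3_pos h).ne'
  rw [geoRotC, rodriguesC, crossC_eq_cross, dotC_eq_dotProduct, dotR_eq_dotProduct,
    crossR_eq_cross, toC_smul, map_smul, LinearMap.smul_apply, smul_dotProduct, smul_eq_mul,
    ← norm3_sq]
  match_scalars <;> field_simp

lemma geoRotC_apply_of_dotProduct_eq_zero {ω₁ ω₂ : V3} (hω₁ : ω₁ ⬝ᵥ ω₁ = 1)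
    (hω₂ : ω₂ ⬝ᵥ ω₂ = 1) (h : ω₁ ⨯₃ ω₂ ≠ 0) {v : C3} (hv : v ⬝ᵥ toC ω₁ = 0) :
    geoRotC ω₁ ω₂ v = v - (v ⬝ᵥ toC ω₂ / (1 + (ω₁ ⬝ᵥ ω₂ : ℝ))) • (toC ω₁ + toC ω₂) := by
  have hqq : ω₁ ⨯₃ ω₂ ⬝ᵥ ω₁ ⨯₃ ω₂ = (1 - ω₁ ⬝ᵥ ω₂) * (1 + ω₁ ⬝ᵥ ω₂) := by
    rw [cross_dot_cross, hω₁, hω₂, dotProduct_comm ω₂ ω₁]; ring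
  have hc : ((1 - ω₁ ⬝ᵥ ω₂) * (1 + ω₁ ⬝ᵥ ω₂) : ℂ) ≠ 0 := by
    exact_mod_cast hqq ▸ dotProduct_self_eq_zero.not.2 h
  have hminus := left_ne_zero_of_mul hc
  have hplus := right_ne_zero_of_mul hc
  rw [dotProduct_comm] at hv
  rw [geoRotC_apply h, Complex.ofReal_div, mul_smul, toC_cross,
    cross_cross_of_dotProduct_eq_zero hv, dotProduct_cross_smul_cross_of_dotProduct_eq_zero hv,
    ← toC_cross, toC_dotProduct_toC, toC_dotProduct_toC, toC_dotProduct_toC, hqq, hω₁,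
    dotProduct_comm (toC ω₂)]
  push_cast
  match_scalars <;> field_simp <;> ring

section EqualLengths

variable {n₁ n₂ : V3}

lemma geoRotC_inv_norm3_smul_of_dotProduct_eq_zero (hnorm : norm3 n₁ = norm3 n₂)
    (hind : LinearIndependent ℝ ![n₁, n₂]) {v : C3} (hv : v ⬝ᵥ toC n₁ = 0) :
    geoRotC ((norm3 n₁)⁻¹ • n₁) ((norm3 n₂)⁻¹ • n₂) v =
      v - (2 * (v ⬝ᵥ toC n₂) / ((n₁ + n₂) ⬝ᵥ (n₁ + n₂) : ℝ)) • toC (n₁ + n₂) := by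
  have hρ : norm3 n₁ ≠ 0 := (norm3_pos (hind.ne_zero 0)).ne'
  have hρC : (norm3 n₁ : ℂ) ≠ 0 := Complex.ofReal_ne_zero.2 hρ
  have hN₁ : n₁ ⬝ᵥ n₁ = norm3 n₁ ^ 2 := (norm3_sq n₁).symm
  have hN₂ : n₂ ⬝ᵥ n₂ = norm3 n₁ ^ 2 := hnorm ▸ (norm3_sq n₂).symm
  have hm : (n₁ + n₂) ⬝ᵥ (n₁ + n₂) = 2 * (norm3 n₁ ^ 2 + n₁ ⬝ᵥ n₂) := by
    simp only [add_dotProduct, dotProduct_add, hN₁, hN₂, dotProduct_comm n₂ n₁]; ring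
  have hm' : ((norm3 n₁ : ℂ) ^ 2 + (n₁ ⬝ᵥ n₂ : ℝ)) ≠ 0 := by
    exact_mod_cast right_ne_zero_of_mul (hm ▸ add_dotProduct_add_ne_zero_of_linearIndependent hind)
  rw [← hnorm, geoRotC_apply_of_dotProduct_eq_zero]
  · rw [toC_smul, toC_smul, toC_add, dotProduct_smul, smul_eq_mul, smul_dotProduct,
      dotProduct_smul, hm]
    push_cast [smul_eq_mul]
    match_scalars <;> field_simp
  · rw [smul_dotProduct, dotProduct_smul, hN₁, smul_eq_mul, smul_eq_mul]; field_simp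
  · rw [smul_dotProduct, dotProduct_smul, hN₂, smul_eq_mul, smul_eq_mul]; field_simp
  · simp only [map_smul, LinearMap.smul_apply, smul_smul]
    rw [smul_ne_zero_iff]
    exact ⟨by positivity, crossProduct_ne_zero_iff_linearIndependent.2 hind⟩
  · rw [toC_smul, dotProduct_smul, hv, smul_zero]

lemma geoRotC_inv_norm3_smul_dotProduct_toC (hnorm : norm3 n₁ = norm3 n₂)
    (hind : LinearIndependent ℝ ![n₁, n₂]) {v : C3} (hv : v ⬝ᵥ toC n₁ = 0) :
    geoRotC ((norm3 n₁)⁻¹ • n₁) ((norm3 n₂)⁻¹ • n₂) v ⬝ᵥ toC n₁ = -(v ⬝ᵥ toC n₂) := by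
  have hm : (((n₁ + n₂) ⬝ᵥ (n₁ + n₂) : ℝ) : ℂ) = 2 * toC (n₁ + n₂) ⬝ᵥ toC n₁ := by
    rw [toC_dotProduct_toC]; exact_mod_cast (norm3_eq_norm3_iff n₁ n₂).1 hnorm
  have hm' : toC (n₁ + n₂) ⬝ᵥ toC n₁ ≠ 0 := right_ne_zero_of_mul <| hm ▸
    Complex.ofReal_ne_zero.2 (add_dotProduct_add_ne_zero_of_linearIndependent hind)
  rw [geoRotC_inv_norm3_smul_of_dotProduct_eq_zero hnorm hind hv, sub_dotProduct,
    smul_dotProduct, hv, smul_eq_mul, hm]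
  field_simp
  ring

end EqualLengths

/-- The velocity field `u₁ e^{i n₁·x} + u₂ e^{i n₂·x}` has nonlinear term `(u·∇)u` with
`e^{i(n₁+n₂)·x}`-coefficient `i · interaction n₁ n₂ u₁ u₂`. -/
def interaction (n₁ n₂ : V3) (u₁ u₂ : C3) : C3 :=
  (u₁ ⬝ᵥ toC n₂) • u₂ + (u₂ ⬝ᵥ toC n₁) • u₁

section Interaction

variable {n₁ n₂ : V3} {u₁ u₂ : C3}

lemma interaction_dotProduct_toC_left (ho₁ : u₁ ⬝ᵥ toC n₁ = 0) :
    interaction n₁ n₂ u₁ u₂ ⬝ᵥ toC n₁ = (u₁ ⬝ᵥ toC n₂) * (u₂ ⬝ᵥ toC n₁) := by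
  rw [interaction, add_dotProduct, smul_dotProduct, smul_dotProduct, ho₁, smul_eq_mul,
    smul_zero, add_zero]

lemma toC_add_dotProduct_interaction (ho₁ : u₁ ⬝ᵥ toC n₁ = 0) (ho₂ : u₂ ⬝ᵥ toC n₂ = 0) :
    toC (n₁ + n₂) ⬝ᵥ interaction n₁ n₂ u₁ u₂ = 2 * (u₁ ⬝ᵥ toC n₂) * (u₂ ⬝ᵥ toC n₁) := by
  simp only [interaction, toC_add, add_dotProduct, dotProduct_add, dotProduct_smul,
    dotProduct_comm (toC _) u₁, dotProduct_comm (toC _) u₂, ho₁, ho₂, smul_eq_mul]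
  ring

lemma projC_interaction_eq_zero_iff (ho₁ : u₁ ⬝ᵥ toC n₁ = 0) (ho₂ : u₂ ⬝ᵥ toC n₂ = 0) :
    projC (n₁ + n₂) (interaction n₁ n₂ u₁ u₂) = 0 ↔ interaction n₁ n₂ u₁ u₂ =
      (2 * (u₁ ⬝ᵥ toC n₂) * (u₂ ⬝ᵥ toC n₁) / ((n₁ + n₂) ⬝ᵥ (n₁ + n₂) : ℝ)) • toC (n₁ + n₂) := by
  rw [projC, sub_eq_zero, dotC_eq_dotProduct, toC_add_dotProduct_interaction ho₁ ho₂,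
    dotR_eq_dotProduct]

lemma interaction_eq_smul_of_eq_smul_geoRotC (hnorm : norm3 n₁ = norm3 n₂)
    (hind : LinearIndependent ℝ ![n₁, n₂]) (ho₁ : u₁ ⬝ᵥ toC n₁ = 0) {γ : ℂ}
    (hu₂ : u₂ = γ • geoRotC ((norm3 n₁)⁻¹ • n₁) ((norm3 n₂)⁻¹ • n₂) u₁) :
    interaction n₁ n₂ u₁ u₂ =
      (2 * (u₁ ⬝ᵥ toC n₂) * (u₂ ⬝ᵥ toC n₁) / ((n₁ + n₂) ⬝ᵥ (n₁ + n₂) : ℝ)) • toC (n₁ + n₂) := by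
  have hm := Complex.ofReal_ne_zero.2 (add_dotProduct_add_ne_zero_of_linearIndependent hind)
  rw [interaction, hu₂, smul_dotProduct, geoRotC_inv_norm3_smul_dotProduct_toC hnorm hind ho₁,
    geoRotC_inv_norm3_smul_of_dotProduct_eq_zero hnorm hind ho₁]
  match_scalars <;> field_simp <;> ring

lemma eq_smul_geoRotC_of_interaction_eq_smul (hind : LinearIndependent ℝ ![n₁, n₂])
    (ho₁ : u₁ ⬝ᵥ toC n₁ = 0) (hu₂ : u₂ ≠ 0) (ha : u₁ ⬝ᵥ toC n₂ ≠ 0)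
    (H : interaction n₁ n₂ u₁ u₂ =
      (2 * (u₁ ⬝ᵥ toC n₂) * (u₂ ⬝ᵥ toC n₁) / ((n₁ + n₂) ⬝ᵥ (n₁ + n₂) : ℝ)) • toC (n₁ + n₂)) :
    norm3 n₁ = norm3 n₂ ∧
      ∃ γ : ℂ, γ ≠ 0 ∧ u₂ = γ • geoRotC ((norm3 n₁)⁻¹ • n₁) ((norm3 n₂)⁻¹ • n₂) u₁ := by
  have hm := Complex.ofReal_ne_zero.2 (add_dotProduct_add_ne_zero_of_linearIndependent hind)
  have hb : u₂ ⬝ᵥ toC n₁ ≠ 0 := by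
    intro hb
    rw [interaction, hb, zero_smul, add_zero, mul_zero, zero_div, zero_smul, smul_eq_zero] at H
    exact H.elim ha hu₂
  have hnorm : norm3 n₁ = norm3 n₂ := by
    have h := congrArg (· ⬝ᵥ toC n₁) H
    simp only [interaction_dotProduct_toC_left ho₁, smul_dotProduct, toC_dotProduct_toC,
      smul_eq_mul] at h
    field_simp at h
    rw [norm3_eq_norm3_iff]
    exact_mod_cast h
  refine ⟨hnorm, -((u₂ ⬝ᵥ toC n₁) / (u₁ ⬝ᵥ toC n₂)), by simp [ha, hb], ?_⟩
  rw [geoRotC_inv_norm3_smul_of_dotProduct_eq_zero hnorm hind ho₁]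
  rw [interaction] at H
  linear_combination (norm := skip) (u₁ ⬝ᵥ toC n₂)⁻¹ • H
  match_scalars <;> field_simp <;> ring

end Interaction

theorem two_mode_no_interaction_characterization_general
    (n₁ n₂ : V3) (u₁ u₂ : C3)
    (hn₁ : n₁ ≠ 0) (hn₂ : n₂ ≠ 0)
    (hu₁ : u₁ ≠ 0) (hu₂ : u₂ ≠ 0)
    (ho₁ : dotC u₁ (toC n₁) = 0) (ho₂ : dotC u₂ (toC n₂) = 0) :
    projC (n₁ + n₂) (dotC u₁ (toC n₂) • u₂ + dotC u₂ (toC n₁) • u₁) = 0 ↔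
      (¬ LinearIndependent ℝ ![n₁, n₂]) ∨
      (LinearIndependent ℝ ![n₁, n₂] ∧ PerpToPlane n₁ n₂ u₁ ∧ PerpToPlane n₁ n₂ u₂) ∨
      (LinearIndependent ℝ ![n₁, n₂] ∧ ¬ (PerpToPlane n₁ n₂ u₁ ∧ PerpToPlane n₁ n₂ u₂) ∧
        norm3 n₁ = norm3 n₂ ∧
        ∃ γ : ℂ, γ ≠ 0 ∧ u₂ = γ • geoRotC ((norm3 n₁)⁻¹ • n₁) ((norm3 n₂)⁻¹ • n₂) u₁) := by
  simp only [dotC_eq_dotProduct] at ho₁ ho₂ ⊢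
  change projC (n₁ + n₂) (interaction n₁ n₂ u₁ u₂) = 0 ↔ _
  rw [projC_interaction_eq_zero_iff ho₁ ho₂]
  by_cases hind : LinearIndependent ℝ ![n₁, n₂]
  · simp only [perpToPlane_iff, ho₁, ho₂, hind, not_true_eq_false, false_or, true_and, and_true]
    constructor
    · intro H
      by_cases ha : u₁ ⬝ᵥ toC n₂ = 0
      · refine Or.inl ⟨ha, ?_⟩
        simpa [interaction, ha, hu₁] using H
      · exact Or.inr ⟨fun h => ha h.1, eq_smul_geoRotC_of_interaction_eq_smul hind ho₁ hu₂ ha H⟩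
    · rintro (⟨ha, hb⟩ | ⟨-, hnorm, γ, -, hu⟩)
      · simp [interaction, ha, hb]
      · exact interaction_eq_smul_of_eq_smul_geoRotC hnorm hind ho₁ hu
  · have ha := dotProduct_toC_eq_zero_of_not_linearIndependent hn₁ hind ho₁
    have hb := dotProduct_toC_eq_zero_of_not_linearIndependent hn₂
      (LinearIndependent.pair_symm_iff.not.1 hind) ho₂
    simp [interaction, ha, hb, hind]

/-- Complete characterization of two non-interacting Fourier modes. -/
theorem two_mode_no_interaction_characterization
    (n₁ n₂ : V3) (u₁ u₂ : C3)
    (hn₁ : n₁ ≠ 0) (hn₂ : n₂ ≠ 0) (hne : n₁ ≠ n₂) (hne' : n₁ ≠ -n₂)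
    (hsum : n₁ + n₂ ≠ 0)
    (hu₁ : u₁ ≠ 0) (hu₂ : u₂ ≠ 0)
    (ho₁ : dotC u₁ (toC n₁) = 0) (ho₂ : dotC u₂ (toC n₂) = 0) :
    projC (n₁ + n₂) (dotC u₁ (toC n₂) • u₂ + dotC u₂ (toC n₁) • u₁) = 0 ↔
      (¬ LinearIndependent ℝ ![n₁, n₂]) ∨
      (LinearIndependent ℝ ![n₁, n₂] ∧ PerpToPlane n₁ n₂ u₁ ∧ PerpToPlane n₁ n₂ u₂) ∨
      (LinearIndependent ℝ ![n₁, n₂] ∧ ¬ (PerpToPlane n₁ n₂ u₁ ∧ PerpToPlane n₁ n₂ u₂) ∧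
        norm3 n₁ = norm3 n₂ ∧
        ∃ γ : ℂ, γ ≠ 0 ∧ u₂ = γ • geoRotC ((norm3 n₁)⁻¹ • n₁) ((norm3 n₂)⁻¹ • n₂) u₁) :=
  two_mode_no_interaction_characterization_general n₁ n₂ u₁ u₂ hn₁ hn₂ hu₁ hu₂ ho₁ ho₂
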